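/- arXiv:2004.02036 — 2 statements merged into one kernel-verified Lean document; each statement's English description precedes it below -/
import Mathlib

section
/- Schur's bound: for an m×m complex matrix A with entries a_{ij}, the square of every singular value of A is at most max_{i,j} r_i c_j, where r_i = Σ_k |a_{ik}| is the i-th absolute row sum and c_j = Σ_k |a_{kj}| is the j-th absolute column sum. -/
/-!
Schur test. By Cauchy–Schwarz with weights `|a_ij|`,
`|∑_j a_ij x_j|² ≤ r_i ∑_j |a_ij| |x_j|²`; summing over `i` and exchanging the sums gives
`‖A x‖² ≤ (max_i r_i) ∑_j c_j |x_j|² ≤ (max_i r_i)(max_j c_j) ‖x‖²`, and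
`(max_i r_i)(max_j c_j) = max_{i,j} r_i c_j`.
-/

open scoped Matrix.Norms.L2Operator

open Finset

theorem norm_sum_mul_sq_le {ι R : Type*} [SeminormedRing R] (s : Finset ι) (a x : ι → R) :
    ‖∑ j ∈ s, a j * x j‖ ^ 2 ≤ (∑ j ∈ s, ‖a j‖) * ∑ j ∈ s, ‖a j‖ * ‖x j‖ ^ 2 :=
  calc ‖∑ j ∈ s, a j * x j‖ ^ 2
      ≤ (∑ j ∈ s, ‖a j‖ * ‖x j‖) ^ 2 := by
        gcongr
        exact (norm_sum_le _ _).trans (sum_le_sum fun j _ => norm_mul_le _ _)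
    _ ≤ (∑ j ∈ s, ‖a j‖) * ∑ j ∈ s, ‖a j‖ * ‖x j‖ ^ 2 :=
        sum_sq_le_sum_mul_sum_of_sq_le_mul s (fun j _ => by positivity)
          (fun j _ => by positivity) (fun j _ => le_of_eq (by ring))

namespace Matrix

variable {𝕜 m n : Type*} [RCLike 𝕜] [Fintype m] [Fintype n]

theorem sum_norm_mulVec_sq_le {A : Matrix m n 𝕜} {R C : ℝ} (hR0 : 0 ≤ R)
    (hR : ∀ i, ∑ k, ‖A i k‖ ≤ R) (hC : ∀ j, ∑ k, ‖A k j‖ ≤ C) (x : n → 𝕜) :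
    ∑ i, ‖(A *ᵥ x) i‖ ^ 2 ≤ R * C * ∑ j, ‖x j‖ ^ 2 :=
  calc ∑ i, ‖(A *ᵥ x) i‖ ^ 2
      ≤ ∑ i, (∑ j, ‖A i j‖) * ∑ j, ‖A i j‖ * ‖x j‖ ^ 2 :=
        sum_le_sum fun i _ => norm_sum_mul_sq_le _ _ _
    _ ≤ ∑ i, R * ∑ j, ‖A i j‖ * ‖x j‖ ^ 2 := by
        gcongr with i
        exact hR i
    _ = R * ∑ j, (∑ i, ‖A i j‖) * ‖x j‖ ^ 2 := by
        rw [← mul_sum, sum_comm]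
        simp_rw [sum_mul]
    _ ≤ R * ∑ j, C * ‖x j‖ ^ 2 := by
        gcongr with j
        exact hC j
    _ = R * C * ∑ j, ‖x j‖ ^ 2 := by rw [← mul_sum, mul_assoc]

theorem l2_opNorm_sq_le_of_rowSum_le_of_colSum_le [DecidableEq n] {A : Matrix m n 𝕜} {R C : ℝ}
    (hR0 : 0 ≤ R) (hC0 : 0 ≤ C) (hR : ∀ i, ∑ k, ‖A i k‖ ≤ R) (hC : ∀ j, ∑ k, ‖A k j‖ ≤ C) :
    ‖A‖ ^ 2 ≤ R * C := by
  suffices ‖A‖ ≤ √(R * C) from (Real.le_sqrt (norm_nonneg _) (mul_nonneg hR0 hC0)).mp this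
  refine ContinuousLinearMap.opNorm_le_bound _ (Real.sqrt_nonneg _) fun x => ?_
  rw [← Real.sqrt_sq (norm_nonneg x), ← Real.sqrt_mul' _ (sq_nonneg _)]
  refine Real.le_sqrt_of_sq_le ?_
  rw [EuclideanSpace.norm_sq_eq, EuclideanSpace.norm_sq_eq]
  exact sum_norm_mulVec_sq_le hR0 hR hC x

end Matrix

theorem Real.iSup_mul_iSup_of_nonneg {ι ι' : Type*} {f : ι → ℝ} {g : ι' → ℝ}
    (hf : ∀ i, 0 ≤ f i) (hg : ∀ j, 0 ≤ g j) :
    (⨆ i, f i) * (⨆ j, g j) = ⨆ i, ⨆ j, f i * g j := by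
  rw [Real.iSup_mul_of_nonneg (Real.iSup_nonneg hg)]
  exact iSup_congr fun i => Real.mul_iSup_of_nonneg (hf i) g

/-- Schur's bound: the square of every singular value of `A` (equivalently, the square of the
`ℓ² → ℓ²` operator norm of `A`) is at most `max_{i,j} r_i * c_j`, where `r_i` is the `i`-th
absolute row sum and `c_j` is the `j`-th absolute column sum. -/
theorem schur_bound (m : ℕ) (A : Matrix (Fin m) (Fin m) ℂ) :
    ‖A‖ ^ 2 ≤ ⨆ i : Fin m, ⨆ j : Fin m,
      (∑ k, ‖A i k‖) * (∑ k, ‖A k j‖) := by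
  have hr (i : Fin m) : 0 ≤ ∑ k, ‖A i k‖ := sum_nonneg fun k _ => norm_nonneg _
  have hc (j : Fin m) : 0 ≤ ∑ k, ‖A k j‖ := sum_nonneg fun k _ => norm_nonneg _
  rw [← Real.iSup_mul_iSup_of_nonneg hr hc]
  exact Matrix.l2_opNorm_sq_le_of_rowSum_le_of_colSum_le (Real.iSup_nonneg hr)
    (Real.iSup_nonneg hc) (le_ciSup (Finite.bddAbove_range _)) (le_ciSup (Finite.bddAbove_range _))
end

section
/- Fourier slice theorem: if F : ℝ² → ℂ is integrable and f(ρ,θ) = ∫_ℝ F(ρ cos θ − s sin θ, ρ sin θ + s cos θ) ds is its Radon transform, then the 1D Fourier transform of f in the ρ variable at frequency k equals the 2D Fourier transform of F evaluated at (k cos θ, k sin θ): ∫_ℝ f(ρ,θ) e^{−2πiρk} dρ = ∫_{ℝ²} F(x,y) e^{−2πi(x k cos θ + y k sin θ)} dx dy. -/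
open Real MeasureTheory

/-! Substituting `p = R_θ (ρ, s)` with the rotation `R_θ`, which preserves Lebesgue measure,
turns the 2D Fourier integral into an iterated integral over `ρ` and `s` (Fubini), and the
phase `⟨R_θ (ρ, s), k (cos θ, sin θ)⟩ = ρ k` no longer depends on `s`. -/

noncomputable def planeRotation (θ : ℝ) : (ℝ × ℝ) ≃L[ℝ] (ℝ × ℝ) :=
  Complex.equivRealProdCLM.symm.trans
    ((rotation (Circle.exp θ)).toContinuousLinearEquiv.trans Complex.equivRealProdCLM)

@[simp]
lemma planeRotation_apply (θ : ℝ) (p : ℝ × ℝ) :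
    planeRotation θ p = (p.1 * cos θ - p.2 * sin θ, p.1 * sin θ + p.2 * cos θ) := by
  ext <;> simp [planeRotation, Circle.coe_exp, Complex.exp_mul_I, ← Complex.ofReal_cos,
    ← Complex.ofReal_sin] <;> ring

lemma measurePreserving_planeRotation (θ : ℝ) : MeasurePreserving (planeRotation θ) :=
  (Complex.volume_preserving_equiv_real_prod.comp (rotation _).measurePreserving).comp
    (Complex.volume_preserving_equiv_real_prod.symm _)

lemma integral_integral_comp_planeRotation {E : Type*} [NormedAddCommGroup E] [NormedSpace ℝ E]
    {G : ℝ × ℝ → E} (hG : Integrable G) (θ : ℝ) :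
    ∫ ρ, ∫ s, G (planeRotation θ (ρ, s)) = ∫ p, G p := by
  have hrot := measurePreserving_planeRotation θ
  have he := (planeRotation θ).toHomeomorph.measurableEmbedding
  have hGrot : Integrable (G ∘ planeRotation θ) (volume.prod volume) :=
    (hrot.integrable_comp_emb he).mpr hG
  rw [← hrot.integral_comp he, Measure.volume_eq_prod]
  exact integral_integral hGrot

lemma planeRotation_dot_direction (θ ρ s k : ℝ) :
    (planeRotation θ (ρ, s)).1 * (k * cos θ) + (planeRotation θ (ρ, s)).2 * (k * sin θ) =
      ρ * k := by
  simp only [planeRotation_apply]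
  linear_combination ρ * k * sin_sq_add_cos_sq θ

lemma MeasureTheory.Integrable.mul_exp_ofReal_mul_I {α : Type*} [MeasurableSpace α]
    {μ : Measure α} {f : α → ℂ} (hf : Integrable f μ) {φ : α → ℝ}
    (hφ : AEStronglyMeasurable φ μ) :
    Integrable (fun x => f x * Complex.exp (φ x * Complex.I)) μ :=
  hf.mul_bdd (by fun_prop) (c := 1) (.of_forall fun x => (Complex.norm_exp_ofReal_mul_I _).le)

/-- Fourier slice theorem: the 1D Fourier transform (in the offset variable `ρ`) of the Radon
transform of an integrable `F : ℝ² → ℂ` at angle `θ` and frequency `k` equals the 2D Fourier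
transform of `F` evaluated at `(k cos θ, k sin θ)`. -/
theorem fourier_slice (F : ℝ × ℝ → ℂ) (hF : Integrable F) (θ k : ℝ) :
    (∫ ρ : ℝ, (∫ s : ℝ, F (ρ * cos θ - s * sin θ, ρ * sin θ + s * cos θ)) *
        Complex.exp (((-2 * π * ρ * k : ℝ) : ℂ) * Complex.I))
      = ∫ p : ℝ × ℝ, F p *
          Complex.exp (((-2 * π * (p.1 * (k * cos θ) + p.2 * (k * sin θ)) : ℝ) : ℂ) *
            Complex.I) := by
  have hG := hF.mul_exp_ofReal_mul_I
    (φ := fun p => -2 * π * (p.1 * (k * cos θ) + p.2 * (k * sin θ))) (by fun_prop)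
  rw [← integral_integral_comp_planeRotation hG θ]
  congr 1 with ρ
  rw [← integral_mul_const]
  congr 1 with s
  rw [planeRotation_dot_direction, planeRotation_apply, mul_assoc (-2 * π)]
end
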